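/- arXiv:2004.00393 — 4 statements merged into one kernel-verified Lean document; each statement's English description precedes it below -/
import Mathlib

section
/- For all d ≥ 1, n ≥ 1 and λ > 0, e^{-λ 2^d} n^{-λ} ≤ exp(-λ ∫_{1/n}^1 (r + 1/n)^d r^{-d-1} dr) ≤ n^{-λ}. -/
/-! Write the integrand as `r⁻¹ (1 + a / r) ^ d` with `a = 1 / n ≤ r`. It is at least `r⁻¹`, and,
since `(1 + t) ^ d` is convex, it lies below its chord on `t ∈ [0, 1]`, which gives at most
`r⁻¹ + (2 ^ d - 1) a r⁻²`. Integrating over `[a, 1]` yields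
`log n ≤ ∫ ≤ log n + (2 ^ d - 1) (1 - a)`, and both bounds follow by exponentiating. -/

open intervalIntegral MeasureTheory Real

theorem one_add_pow_le_one_add_mul (d : ℕ) {t : ℝ} (ht₀ : 0 ≤ t) (ht₁ : t ≤ 1) :
    (1 + t) ^ d ≤ 1 + (2 ^ d - 1) * t := by
  induction d with
  | zero => simp
  | succ d ih =>
    have h2 : (1 : ℝ) ≤ 2 ^ d := one_le_pow₀ (by norm_num)
    calc (1 + t) ^ (d + 1) = (1 + t) ^ d * (1 + t) := pow_succ _ _
      _ ≤ (1 + (2 ^ d - 1) * t) * (1 + t) := by gcongr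
      _ ≤ 1 + (2 ^ (d + 1) - 1) * t := by
        rw [pow_succ]; nlinarith [mul_nonneg (sub_nonneg.2 h2) (sub_nonneg.2 ht₁)]

theorem add_pow_div_pow_succ (d : ℕ) {r : ℝ} (a : ℝ) (hr : r ≠ 0) :
    (r + a) ^ d / r ^ (d + 1) = r⁻¹ * (1 + a / r) ^ d := by
  rw [one_add_div hr, div_pow, pow_succ]
  field_simp

theorem inv_le_add_pow_div_pow_succ (d : ℕ) {r a : ℝ} (hr : 0 < r) (ha : 0 ≤ a) :
    r⁻¹ ≤ (r + a) ^ d / r ^ (d + 1) := by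
  rw [add_pow_div_pow_succ d a hr.ne']
  exact le_mul_of_one_le_right (inv_nonneg.2 hr.le)
    (one_le_pow₀ (le_add_of_nonneg_right (div_nonneg ha hr.le)))

theorem add_pow_div_pow_succ_le (d : ℕ) {r a : ℝ} (ha : 0 < a) (har : a ≤ r) :
    (r + a) ^ d / r ^ (d + 1) ≤ r⁻¹ + (2 ^ d - 1) * a * (r ^ 2)⁻¹ := by
  have hr : 0 < r := ha.trans_le har
  rw [add_pow_div_pow_succ d a hr.ne']
  calc r⁻¹ * (1 + a / r) ^ d ≤ r⁻¹ * (1 + (2 ^ d - 1) * (a / r)) := by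
        gcongr
        exact one_add_pow_le_one_add_mul d (div_nonneg ha.le hr.le) ((div_le_one hr).2 har)
    _ = r⁻¹ + (2 ^ d - 1) * a * (r ^ 2)⁻¹ := by field_simp

theorem intervalIntegrable_of_continuousOn_Ioi {f : ℝ → ℝ} {a b : ℝ} (ha : 0 < a) (hb : 0 < b)
    (hf : ContinuousOn f (Set.Ioi 0)) : IntervalIntegrable f volume a b :=
  (hf.mono fun _ hr => (lt_min ha hb).trans_le hr.1).intervalIntegrable

theorem intervalIntegrable_inv_add_mul_inv_sq (c : ℝ) {a : ℝ} (ha : 0 < a) :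
    IntervalIntegrable (fun r => r⁻¹ + c * (r ^ 2)⁻¹) volume a 1 :=
  intervalIntegrable_of_continuousOn_Ioi ha one_pos <|
    (continuousOn_inv₀.mono fun _ hr => ne_of_gt hr).add
      (continuousOn_const.mul ((continuousOn_pow 2).inv₀ fun _ hr => pow_ne_zero _ (ne_of_gt hr)))

theorem integral_inv_add_mul_inv_sq (c : ℝ) {a : ℝ} (ha : 0 < a) :
    ∫ r in a..1, (r⁻¹ + c * a * (r ^ 2)⁻¹) = log a⁻¹ + c * (1 - a) := by
  have hne : ∀ r ∈ Set.uIcc a 1, r ≠ 0 := fun r hr => ((lt_min ha one_pos).trans_le hr.1).ne'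
  rw [integral_eq_sub_of_hasDerivAt (f := fun r => log r - c * a * r⁻¹)
    (fun r hr => ?_) (intervalIntegrable_inv_add_mul_inv_sq _ ha)]
  · simp only [log_one, inv_one, log_inv]
    field_simp
    ring
  · convert (hasDerivAt_log (hne r hr)).sub ((hasDerivAt_inv (hne r hr)).const_mul (c * a))
      using 1
    · rfl
    · ring

theorem intervalIntegrable_add_pow_div_pow_succ (d : ℕ) {a : ℝ} (ha : 0 < a) :
    IntervalIntegrable (fun r => (r + a) ^ d / r ^ (d + 1)) volume a 1 :=
  intervalIntegrable_of_continuousOn_Ioi ha one_pos <|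
    (by fun_prop : Continuous fun r : ℝ => (r + a) ^ d).continuousOn.div (by fun_prop)
      fun _ hr => pow_ne_zero _ (ne_of_gt hr)

theorem log_inv_le_integral_add_pow_div_pow_succ (d : ℕ) {a : ℝ} (ha : 0 < a) (ha₁ : a ≤ 1) :
    log a⁻¹ ≤ ∫ r in a..1, (r + a) ^ d / r ^ (d + 1) := by
  rw [← one_div, ← integral_inv_of_pos ha one_pos]
  exact integral_mono_on ha₁
    (intervalIntegrable_of_continuousOn_Ioi ha one_pos <|
      continuousOn_inv₀.mono fun _ hr => ne_of_gt hr)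
    (intervalIntegrable_add_pow_div_pow_succ d ha)
    fun r hr => inv_le_add_pow_div_pow_succ d (ha.trans_le hr.1) ha.le

theorem integral_add_pow_div_pow_succ_le (d : ℕ) {a : ℝ} (ha : 0 < a) (ha₁ : a ≤ 1) :
    ∫ r in a..1, (r + a) ^ d / r ^ (d + 1) ≤ log a⁻¹ + (2 ^ d - 1) * (1 - a) := by
  rw [← integral_inv_add_mul_inv_sq _ ha]
  exact integral_mono_on ha₁ (intervalIntegrable_add_pow_div_pow_succ d ha)
    (intervalIntegrable_inv_add_mul_inv_sq _ ha) fun r hr => add_pow_div_pow_succ_le d ha hr.1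

theorem stmt6_general (d n : ℕ) (hn : 1 ≤ n) (lam : ℝ) (hlam : 0 < lam) :
    Real.exp (-lam * 2 ^ d) * (n:ℝ) ^ (-lam)
      ≤ Real.exp (-lam * ∫ r in (1/(n:ℝ))..1, (r + 1/(n:ℝ)) ^ d / r ^ (d + 1))
    ∧ Real.exp (-lam * ∫ r in (1/(n:ℝ))..1, (r + 1/(n:ℝ)) ^ d / r ^ (d + 1))
      ≤ (n:ℝ) ^ (-lam) := by
  have hn₀ : (0 : ℝ) < n := by exact_mod_cast hn
  have ha : 0 < 1 / (n : ℝ) := by positivity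
  have ha₁ : 1 / (n : ℝ) ≤ 1 := (div_le_one hn₀).2 (by exact_mod_cast hn)
  have hlog : log (1 / (n : ℝ))⁻¹ = log n := by rw [one_div, inv_inv]
  have hlower := log_inv_le_integral_add_pow_div_pow_succ d ha ha₁
  have hupper := integral_add_pow_div_pow_succ_le d ha ha₁
  rw [hlog] at hlower hupper
  have hcorr : (2 ^ d - 1) * (1 - 1 / (n : ℝ)) ≤ 2 ^ d := by
    nlinarith [one_le_pow₀ (M₀ := ℝ) (a := 2) (n := d) (by norm_num)]
  rw [rpow_def_of_pos hn₀, ← exp_add]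
  constructor <;> apply exp_le_exp.2 <;> nlinarith

/-- `e^{-λ2^d} n^{-λ} ≤ exp(-λ ∫_{1/n}^1 (r+1/n)^d r^{-d-1} dr) ≤ n^{-λ}`. -/
theorem stmt6 (d n : ℕ) (hd : 1 ≤ d) (hn : 1 ≤ n) (lam : ℝ) (hlam : 0 < lam) :
    Real.exp (-lam * 2 ^ d) * (n:ℝ) ^ (-lam)
      ≤ Real.exp (-lam * ∫ r in (1/(n:ℝ))..1, (r + 1/(n:ℝ)) ^ d / r ^ (d + 1))
    ∧ Real.exp (-lam * ∫ r in (1/(n:ℝ))..1, (r + 1/(n:ℝ)) ^ d / r ^ (d + 1))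
      ≤ (n:ℝ) ^ (-lam) :=
  stmt6_general d n hn lam hlam
end

section
/- For all d ≥ 1 and n ≥ 1, ∫_{1/n}^1 (r - 1/n)^d r^{-d-1} dr = log n + Σ_{k=0}^{d-1} C(d,k) (-n)^{k-d} (n^{d-k} - 1)/(d-k), and this quantity is at least log n - 2^d. -/
/-!
Expanding `(r - c)^d` binomially turns the integrand into `r⁻¹` plus a combination of
integer powers `r^(k-d-1)` with `k < d`, so it has the explicit primitive
`log r + Σ_{k<d} C(d,k) (-c)^(d-k) r^(k-d) / (k-d)`; evaluating it between `1/n` and `1`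
gives the closed form. For the lower bound, the `k`-th correction term is
`C(d,k) (1 - n^(k-d)) / (d-k)` up to sign, of absolute value at most `C(d,k)`,
and `Σ_{k<d} C(d,k) < 2^d`.
-/

open Finset

noncomputable def subPowDivPowPrimitive (c : ℝ) (d : ℕ) (r : ℝ) : ℝ :=
  Real.log r + ∑ k ∈ range d, (d.choose k : ℝ) * (-c) ^ (d - k) * r ^ ((k : ℤ) - d) / ((k : ℝ) - d)

lemma sub_pow_div_pow_succ_eq_sum {x : ℝ} (hx : x ≠ 0) (c : ℝ) (d : ℕ) :
    (x - c) ^ d / x ^ (d + 1) =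
      x⁻¹ + ∑ k ∈ range d, (d.choose k : ℝ) * (-c) ^ (d - k) * x ^ ((k : ℤ) - d - 1) := by
  have hterm : ∀ k ∈ range (d + 1), x ^ k * (-c) ^ (d - k) * (d.choose k : ℝ) / x ^ (d + 1)
      = (d.choose k : ℝ) * (-c) ^ (d - k) * x ^ ((k : ℤ) - d - 1) := by
    intro k _
    rw [show (k : ℤ) - d - 1 = (k : ℤ) - (d + 1 : ℕ) by push_cast; ring, zpow_sub₀ hx,
      zpow_natCast, zpow_natCast]
    ring
  rw [sub_eq_add_neg, add_pow, sum_div, sum_congr rfl hterm, sum_range_succ, add_comm]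
  simp

lemma hasDerivAt_subPowDivPowPrimitive {x : ℝ} (hx : x ≠ 0) (c : ℝ) (d : ℕ) :
    HasDerivAt (subPowDivPowPrimitive c d) ((x - c) ^ d / x ^ (d + 1)) x := by
  rw [sub_pow_div_pow_succ_eq_sum hx]
  refine (Real.hasDerivAt_log hx).add (HasDerivAt.fun_sum fun k hk => ?_)
  have hkd : (k : ℝ) - d ≠ 0 := sub_ne_zero.mpr (by exact_mod_cast (mem_range.mp hk).ne)
  refine (((hasDerivAt_zpow ((k : ℤ) - d) x (Or.inl hx)).const_mul
    ((d.choose k : ℝ) * (-c) ^ (d - k))).div_const ((k : ℝ) - d)).congr_deriv ?_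
  rw [Int.cast_sub, Int.cast_natCast, Int.cast_natCast]
  field_simp

lemma integral_sub_pow_div_pow_succ {a b : ℝ} (ha : 0 < a) (hb : 0 < b) (c : ℝ) (d : ℕ) :
    ∫ r in a..b, (r - c) ^ d / r ^ (d + 1) =
      subPowDivPowPrimitive c d b - subPowDivPowPrimitive c d a := by
  have hne : ∀ x ∈ Set.uIcc a b, x ≠ 0 := fun x hx => ((lt_min ha hb).trans_le hx.1).ne'
  refine intervalIntegral.integral_eq_sub_of_hasDerivAt
    (fun x hx => hasDerivAt_subPowDivPowPrimitive (hne x hx) c d) ?_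
  exact (ContinuousOn.div (by fun_prop) (by fun_prop)
    fun x hx => pow_ne_zero _ (hne x hx)).intervalIntegrable

lemma subPowDivPowPrimitive_one_sub_inv (n : ℝ) (d : ℕ) :
    subPowDivPowPrimitive n⁻¹ d 1 - subPowDivPowPrimitive n⁻¹ d n⁻¹ =
      Real.log n + ∑ k ∈ range d,
        (d.choose k : ℝ) * (-n) ^ ((k : ℤ) - d) * ((n ^ ((d : ℤ) - k) - 1) / ((d : ℝ) - k)) := by
  simp only [subPowDivPowPrimitive, Real.log_one, one_zpow, Real.log_inv]
  rw [add_sub_add_comm, ← sum_sub_distrib, zero_sub, neg_neg]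
  refine congrArg _ (sum_congr rfl fun k hk => ?_)
  have hkd : k ≤ d := (mem_range.mp hk).le
  have hdk : (d : ℝ) - k ≠ 0 := sub_ne_zero.mpr (by exact_mod_cast (mem_range.mp hk).ne')
  have hpow : (-n⁻¹) ^ (d - k) = (-n) ^ ((k : ℤ) - d) := by
    rw [neg_inv, inv_pow, ← zpow_natCast, ← zpow_neg, Nat.cast_sub hkd, neg_sub]
  rw [hpow, inv_zpow', neg_sub, ← neg_sub (d : ℝ)]
  field_simp
  ring

lemma abs_neg_zpow_sub_mul_le_one {x : ℝ} (hx : 1 ≤ x) {k d : ℕ} (hk : k < d) :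
    |(-x) ^ ((k : ℤ) - d) * ((x ^ ((d : ℤ) - k) - 1) / ((d : ℝ) - k))| ≤ 1 := by
  have hx0 : 0 < x := one_pos.trans_le hx
  have hdk : (1 : ℝ) ≤ (d : ℝ) - k := by
    have : (k : ℝ) + 1 ≤ d := by exact_mod_cast hk
    linarith
  have hxj : 1 ≤ x ^ ((d : ℤ) - k) := one_le_zpow₀ hx (by omega)
  have hinv : x ^ ((k : ℤ) - d) * x ^ ((d : ℤ) - k) = 1 := by
    rw [← zpow_add₀ hx0.ne', sub_add_sub_cancel, sub_self, zpow_zero]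
  have hpos : 0 < x ^ ((k : ℤ) - d) := zpow_pos hx0 _
  rw [abs_mul, abs_zpow, abs_neg, abs_of_pos hx0,
    abs_of_nonneg (div_nonneg (by linarith) (by linarith)), mul_div_assoc', mul_sub, hinv, mul_one]
  exact div_le_one_of_le₀ (by linarith) (by linarith)

lemma neg_two_pow_le_sum_choose_mul (d : ℕ) {t : ℕ → ℝ} (ht : ∀ k < d, |t k| ≤ 1) :
    -(2 : ℝ) ^ d ≤ ∑ k ∈ range d, (d.choose k : ℝ) * t k := by
  have hchoose : ∑ k ∈ range d, (d.choose k : ℝ) ≤ 2 ^ d := by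
    have h : ∑ k ∈ range (d + 1), (d.choose k : ℝ) = 2 ^ d := by
      exact_mod_cast Nat.sum_range_choose d
    rw [sum_range_succ, Nat.choose_self, Nat.cast_one] at h
    linarith
  calc -(2 : ℝ) ^ d ≤ ∑ k ∈ range d, -(d.choose k : ℝ) := by
        rw [sum_neg_distrib]
        exact neg_le_neg hchoose
    _ ≤ _ := sum_le_sum fun k hk => by
        nlinarith [(abs_le.mp (ht k (mem_range.mp hk))).1, (d.choose k).cast_nonneg (α := ℝ)]

theorem stmt14_general (d n : ℕ) (hn : 1 ≤ n) :
    (∫ r in (1/(n:ℝ))..1, (r - 1/(n:ℝ)) ^ d / r ^ (d + 1)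
      = Real.log n + ∑ k ∈ range d,
          (d.choose k : ℝ) * (-(n:ℝ)) ^ ((k:ℤ) - (d:ℤ)) *
            (((n:ℝ) ^ ((d:ℤ) - (k:ℤ)) - 1) / ((d:ℝ) - (k:ℝ))))
    ∧ Real.log n - 2 ^ d
        ≤ ∫ r in (1/(n:ℝ))..1, (r - 1/(n:ℝ)) ^ d / r ^ (d + 1) := by
  have hn1 : (1 : ℝ) ≤ n := by exact_mod_cast hn
  have hn0 : (0 : ℝ) < n := one_pos.trans_le hn1
  have hclosed := (integral_sub_pow_div_pow_succ (inv_pos.2 hn0) one_pos n⁻¹ d).trans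
    (subPowDivPowPrimitive_one_sub_inv n d)
  rw [← one_div] at hclosed
  refine ⟨hclosed, ?_⟩
  have hsum := neg_two_pow_le_sum_choose_mul d fun k hk => abs_neg_zpow_sub_mul_le_one hn1 hk
  simp only [← mul_assoc] at hsum
  linarith

/-- `∫_{1/n}^1 (r-1/n)^d r^{-d-1} dr
  = log n + Σ_{k=0}^{d-1} C(d,k) (-n)^{k-d} (n^{d-k}-1)/(d-k)`, and this is
at least `log n - 2^d`. -/
theorem stmt14 (d n : ℕ) (hd : 1 ≤ d) (hn : 1 ≤ n) :
    (∫ r in (1/(n:ℝ))..1, (r - 1/(n:ℝ)) ^ d / r ^ (d + 1)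
      = Real.log n + ∑ k ∈ range d,
          (d.choose k : ℝ) * (-(n:ℝ)) ^ ((k:ℤ) - (d:ℤ)) *
            (((n:ℝ) ^ ((d:ℤ) - (k:ℤ)) - 1) / ((d:ℝ) - (k:ℝ))))
    ∧ Real.log n - 2 ^ d
        ≤ ∫ r in (1/(n:ℝ))..1, (r - 1/(n:ℝ)) ^ d / r ^ (d + 1) :=
  stmt14_general d n hn
end

section
/- For all d ≥ 1, n ≥ 1 and λ > 0, n^d · exp(-λ ∫_{1/n}^1 (r - 1/n)^d r^{-d-1} dr) ≤ n^{d-λ} e^{λ 2^d}. In particular, if λ ≥ d, then this quantity is bounded above by e^{λ 2^d} uniformly in n. -/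
/-!
Bernoulli's inequality gives `(r - a)^d / r^(d+1) ≥ (1 - d a / r) / r` for `0 ≤ a ≤ r`, and the right
side integrates over `[a, 1]` to `-log a - d (1 - a)`. With `a = 1/n` the integral is therefore at
least `log n - 2^d`, and exponentiating turns this into the factor `n^(-λ) e^(λ 2^d)`.
-/

open Real

lemma one_sub_mul_div_div_le_sub_pow_div_pow (d : ℕ) {a r : ℝ} (ha : 0 ≤ a) (har : a ≤ r) :
    (1 - d * a / r) / r ≤ (r - a) ^ d / r ^ (d + 1) := by
  rcases (ha.trans har).eq_or_lt with hr | hr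
  · simp [← hr]
  have hbernoulli : 1 - d * a / r ≤ ((r - a) / r) ^ d := by
    have h := one_add_mul_le_pow
      (by linarith [div_le_one_of_le₀ har hr.le, div_nonneg ha hr.le] : -2 ≤ -(a / r)) d
    rwa [← sub_eq_add_neg, one_sub_div hr.ne', mul_neg, ← sub_eq_add_neg, ← mul_div_assoc] at h
  rw [pow_succ, ← div_div, ← div_pow]
  gcongr

lemma pos_of_mem_uIcc_one {a r : ℝ} (ha : 0 < a) (hr : r ∈ Set.uIcc a 1) : 0 < r :=
  (lt_min ha one_pos).trans_le hr.1

lemma intervalIntegrable_one_sub_mul_div_div {a : ℝ} (ha : 0 < a) (c : ℝ) :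
    IntervalIntegrable (fun r => (1 - c * a / r) / r) MeasureTheory.volume a 1 := by
  have hne : ∀ r ∈ Set.uIcc a 1, r ≠ 0 := fun r hr => (pos_of_mem_uIcc_one ha hr).ne'
  exact (ContinuousOn.div (by fun_prop (disch := exact hne)) continuousOn_id hne).intervalIntegrable

lemma integral_one_sub_mul_div_div {a : ℝ} (ha : 0 < a) (c : ℝ) :
    ∫ r in a..1, (1 - c * a / r) / r = -log a - c * (1 - a) := by
  have hderiv : ∀ r ∈ Set.uIcc a 1,
      HasDerivAt (fun r => log r + c * a * r⁻¹) ((1 - c * a / r) / r) r := by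
    intro r hr
    have hr0 := (pos_of_mem_uIcc_one ha hr).ne'
    refine ((hasDerivAt_log hr0).add ((hasDerivAt_inv hr0).const_mul (c * a))).congr_deriv ?_
    field_simp
    ring
  rw [intervalIntegral.integral_eq_sub_of_hasDerivAt hderiv
    (intervalIntegrable_one_sub_mul_div_div ha c)]
  simp only [log_one, inv_one]
  field_simp
  ring

lemma neg_log_sub_le_integral (d : ℕ) {a : ℝ} (ha0 : 0 < a) (ha1 : a ≤ 1) :
    -log a - d ≤ ∫ r in a..1, (r - a) ^ d / r ^ (d + 1) := by
  have hupper : ContinuousOn (fun r => (r - a) ^ d / r ^ (d + 1)) (Set.uIcc a 1) :=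
    ContinuousOn.div (by fun_prop) (by fun_prop) fun r hr =>
      pow_ne_zero _ (pos_of_mem_uIcc_one ha0 hr).ne'
  calc -log a - d ≤ -log a - d * (1 - a) := by nlinarith [d.cast_nonneg (α := ℝ)]
    _ = ∫ r in a..1, (1 - d * a / r) / r := (integral_one_sub_mul_div_div ha0 d).symm
    _ ≤ ∫ r in a..1, (r - a) ^ d / r ^ (d + 1) :=
      intervalIntegral.integral_mono_on ha1 (intervalIntegrable_one_sub_mul_div_div ha0 d)
        hupper.intervalIntegrable
        fun r hr => one_sub_mul_div_div_le_sub_pow_div_pow d ha0.le hr.1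

lemma pow_mul_exp_neg_mul_le {x lam I C : ℝ} (d : ℕ) (hx : 0 < x) (hlam : 0 ≤ lam)
    (hI : log x - C ≤ I) :
    x ^ d * exp (-lam * I) ≤ x ^ ((d : ℝ) - lam) * exp (lam * C) := by
  have hsplit : x ^ ((d : ℝ) - lam) * exp (lam * C) = x ^ d * exp (-lam * (log x - C)) := by
    rw [rpow_sub hx, rpow_natCast, rpow_def_of_pos hx, div_eq_mul_inv, ← exp_neg, mul_assoc,
      ← exp_add]
    ring_nf
  rw [hsplit]
  gcongr x ^ d * exp ?_
  nlinarith

theorem stmt15_general (d n : ℕ) (hn : 1 ≤ n) (lam : ℝ) (hlam : 0 < lam) :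
    (n:ℝ) ^ d *
        Real.exp (-lam * ∫ r in (1/(n:ℝ))..1, (r - 1/(n:ℝ)) ^ d / r ^ (d + 1))
      ≤ (n:ℝ) ^ ((d:ℝ) - lam) * Real.exp (lam * 2 ^ d)
    ∧ ((d:ℝ) ≤ lam →
        (n:ℝ) ^ d *
            Real.exp (-lam * ∫ r in (1/(n:ℝ))..1, (r - 1/(n:ℝ)) ^ d / r ^ (d + 1))
          ≤ Real.exp (lam * 2 ^ d)) := by
  have hn1 : (1 : ℝ) ≤ n := by exact_mod_cast hn
  have hn0 : (0 : ℝ) < n := one_pos.trans_le hn1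
  have hI : log n - 2 ^ d ≤ ∫ r in (1/(n:ℝ))..1, (r - 1/(n:ℝ)) ^ d / r ^ (d + 1) := by
    have h := neg_log_sub_le_integral d (by positivity) (div_le_one_of_le₀ hn1 hn0.le)
    have hlog : -log (1 / (n : ℝ)) = log n := by rw [one_div, log_inv, neg_neg]
    have hd : (d : ℝ) ≤ 2 ^ d := by exact_mod_cast Nat.lt_two_pow_self.le
    linarith
  have hbound := pow_mul_exp_neg_mul_le d hn0 hlam.le hI
  refine ⟨hbound, fun hdlam => hbound.trans ?_⟩
  exact mul_le_of_le_one_left (exp_pos _).le (rpow_le_one_of_one_le_of_nonpos hn1 (by linarith))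

/-- `n^d exp(-λ ∫_{1/n}^1 (r-1/n)^d r^{-d-1} dr) ≤ n^{d-λ} e^{λ2^d}`;
in particular if `λ ≥ d` this is at most `e^{λ2^d}`. -/
theorem stmt15 (d n : ℕ) (hd : 1 ≤ d) (hn : 1 ≤ n) (lam : ℝ) (hlam : 0 < lam) :
    (n:ℝ) ^ d *
        Real.exp (-lam * ∫ r in (1/(n:ℝ))..1, (r - 1/(n:ℝ)) ^ d / r ^ (d + 1))
      ≤ (n:ℝ) ^ ((d:ℝ) - lam) * Real.exp (lam * 2 ^ d)
    ∧ ((d:ℝ) ≤ lam →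
        (n:ℝ) ^ d *
            Real.exp (-lam * ∫ r in (1/(n:ℝ))..1, (r - 1/(n:ℝ)) ^ d / r ^ (d + 1))
          ≤ Real.exp (lam * 2 ^ d)) :=
  stmt15_general d n hn lam hlam
end

section
/- For d ≥ 1 and n > √d/2, ∫_{√d/(2n)}^{1} v_d (r - √d/(2n))^d r^{-d-1} dr = v_d ∫_{1/n}^{2/√d} (s - 1/n)^d s^{-d-1} ds, and there is a constant C = C(d) such that exp(-λ v_d ∫_{1/n}^{2/√d} (s-1/n)^d s^{-d-1} ds) ≤ C n^{-λ v_d} for every λ > 0 (with C depending also on λ). -/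
/-!
The integrand `(r - ρ)^d / r^(d+1)` is homogeneous of degree `-1` in `(r, ρ)`, so its integral is
invariant under the scaling `(r, ρ) ↦ (c r, c ρ)`; this is the change of variables. For the lower
bound, Bernoulli's inequality gives `(s - a)^d / s^(d+1) = (1 - a/s)^d / s ≥ 1/s - d a / s^2`,
whose integral over `[a, b]` is `log (b/a) - d (1 - a/b) ≥ log (b/a) - d`. With `a = 1/n` this is
`log n - c(d)`, and exponentiating turns it into the power bound `n^(-λ v_d)`.
-/

open MeasureTheory

theorem integral_sub_pow_div_pow_comp_mul (d : ℕ) {c : ℝ} (hc : c ≠ 0) (a b : ℝ) :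
    ∫ r in (c * a)..(c * b), (r - c * a) ^ d / r ^ (d + 1)
      = ∫ s in a..b, (s - a) ^ d / s ^ (d + 1) := by
  rw [← intervalIntegral.smul_integral_comp_mul_left, smul_eq_mul,
    ← intervalIntegral.integral_const_mul]
  congr 1
  funext s
  rcases eq_or_ne s 0 with rfl | hs
  · simp
  · rw [← mul_sub, mul_pow, mul_pow]
    field_simp
    ring

theorem inv_sub_mul_div_sq_le_sub_pow_div_pow (d : ℕ) {a s : ℝ} (hs : 0 < s) (has : a ≤ 2 * s) :
    1 / s - d * a / s ^ 2 ≤ (s - a) ^ d / s ^ (d + 1) := by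
  have hbernoulli : 1 + d * (-(a / s)) ≤ (1 + -(a / s)) ^ d :=
    one_add_mul_le_pow (by rw [neg_le_neg_iff, div_le_iff₀ hs]; linarith) d
  calc 1 / s - d * a / s ^ 2 = (1 + d * (-(a / s))) / s := by field_simp; ring
    _ ≤ (1 + -(a / s)) ^ d / s := by gcongr
    _ = (s - a) ^ d / s ^ (d + 1) := by
      rw [show 1 + -(a / s) = (s - a) / s by field_simp; ring, div_pow, pow_succ]
      field_simp

theorem log_div_sub_le_integral_sub_pow_div_pow (d : ℕ) {a b : ℝ} (ha : 0 < a) (hab : a ≤ b) :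
    Real.log (b / a) - d ≤ ∫ s in a..b, (s - a) ^ d / s ^ (d + 1) := by
  have hne : ∀ s ∈ Set.uIcc a b, s ≠ 0 := fun s hs =>
    (ha.trans_le (Set.uIcc_of_le hab ▸ hs).1).ne'
  have hminorant_int : IntervalIntegrable (fun s : ℝ => 1 / s - d * a / s ^ 2) volume a b :=
    (ContinuousOn.sub (continuousOn_const.div continuousOn_id hne)
      (continuousOn_const.div (continuousOn_pow 2) fun s hs => pow_ne_zero 2 (hne s hs))
      ).intervalIntegrable
  have hintegrand_int :
      IntervalIntegrable (fun s : ℝ => (s - a) ^ d / s ^ (d + 1)) volume a b :=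
    (ContinuousOn.div (by fun_prop) (continuousOn_pow _)
      fun s hs => pow_ne_zero _ (hne s hs)).intervalIntegrable
  have hminorant : ∫ s in a..b, (1 / s - d * a / s ^ 2)
      = (Real.log b + d * a / b) - (Real.log a + d * a / a) := by
    refine intervalIntegral.integral_eq_sub_of_hasDerivAt
      (f := fun s => Real.log s + d * a / s) (fun s hs => ?_) hminorant_int
    have hs := hne s hs
    convert ((Real.hasDerivAt_log hs).add ((hasDerivAt_inv hs).const_mul ((d : ℝ) * a)))
      using 1
    · funext y
      simp [div_eq_mul_inv]
    · field_simp
      ring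
  have hmono := intervalIntegral.integral_mono_on hab hminorant_int hintegrand_int fun s hs =>
    inv_sub_mul_div_sq_le_sub_pow_div_pow d (ha.trans_le hs.1) (by linarith [hs.1])
  have hda : (d : ℝ) * a / a = d := by field_simp
  have hdb : 0 ≤ (d : ℝ) * a / b := div_nonneg (by positivity) (ha.le.trans hab)
  rw [Real.log_div (ha.trans_le hab).ne' ha.ne']
  linarith

theorem exp_neg_mul_le_mul_rpow_neg {x K I μ : ℝ} (hx : 0 < x) (hμ : 0 ≤ μ)
    (hI : Real.log x - K ≤ I) : Real.exp (-μ * I) ≤ Real.exp (μ * K) * x ^ (-μ) := by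
  rw [Real.rpow_def_of_pos hx, ← Real.exp_add, Real.exp_le_exp]
  nlinarith

/-- Change of variables `r = (√d/2)s` for the ball-covering integral, and the
resulting bound `exp(-λ v_d ∫_{1/n}^{2/√d} (s-1/n)^d s^{-d-1} ds) ≤ C n^{-λ v_d}`. -/
theorem stmt16 (d : ℕ) (hd : 1 ≤ d) :
    (∀ n : ℕ, Real.sqrt d / 2 < (n:ℝ) →
      ∫ r in (Real.sqrt d / (2*(n:ℝ)))..1,
          (volume (Metric.ball (0 : EuclideanSpace ℝ (Fin d)) 1)).toReal *
            (r - Real.sqrt d / (2*(n:ℝ))) ^ d / r ^ (d + 1)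
        = (volume (Metric.ball (0 : EuclideanSpace ℝ (Fin d)) 1)).toReal *
            ∫ s in (1/(n:ℝ))..(2 / Real.sqrt d), (s - 1/(n:ℝ)) ^ d / s ^ (d + 1))
    ∧ ∀ lam : ℝ, 0 < lam → ∃ C : ℝ, 0 < C ∧ ∀ n : ℕ, Real.sqrt d / 2 < (n:ℝ) →
        Real.exp (-lam *
            ((volume (Metric.ball (0 : EuclideanSpace ℝ (Fin d)) 1)).toReal *
              ∫ s in (1/(n:ℝ))..(2 / Real.sqrt d), (s - 1/(n:ℝ)) ^ d / s ^ (d + 1)))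
          ≤ C * (n:ℝ) ^
              (-(lam * (volume (Metric.ball (0 : EuclideanSpace ℝ (Fin d)) 1)).toReal)) := by
  set v := (volume (Metric.ball (0 : EuclideanSpace ℝ (Fin d)) 1)).toReal
  have hsqrt : 0 < Real.sqrt d := Real.sqrt_pos.2 (by exact_mod_cast hd)
  refine ⟨fun n hn => ?_, fun lam hlam =>
    ⟨Real.exp (lam * v * (d - Real.log (2 / Real.sqrt d))), Real.exp_pos _, fun n hn => ?_⟩⟩
  · have hscale := integral_sub_pow_div_pow_comp_mul d (c := Real.sqrt d / 2) (by positivity)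
      (1 / n) (2 / Real.sqrt d)
    rw [show Real.sqrt d / 2 * (1 / n) = Real.sqrt d / (2 * n) by ring,
      show Real.sqrt d / 2 * (2 / Real.sqrt d) = 1 by field_simp] at hscale
    simp only [mul_div_assoc, intervalIntegral.integral_const_mul, hscale]
  · have hn : (0 : ℝ) < n := by linarith [div_pos hsqrt two_pos]
    have hlower := log_div_sub_le_integral_sub_pow_div_pow d (by positivity : (0 : ℝ) < 1 / n)
      (show 1 / (n : ℝ) ≤ 2 / Real.sqrt d by rw [div_le_div_iff₀ hn hsqrt]; linarith)
    rw [div_div_eq_mul_div, div_one, Real.log_mul (by positivity) hn.ne'] at hlower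
    rw [← mul_assoc, neg_mul]
    exact exp_neg_mul_le_mul_rpow_neg hn (by positivity) (by linarith)
end
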